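/- arXiv:math/0607049 — 6 statements merged into one kernel-verified Lean document; each statement's English description precedes it below -/
import Mathlib

section
/- Let n ≥ 1 be an integer, let q ∈ ℂ be nonzero and not a root of unity, and let λ be any Young diagram. Then Q_λ(−q^{2n}, q) = Q_λ(q^{2n}, −q). -/
open scoped BigOperators

/-- The cells of a Young diagram in the paper's 1-indexed coordinates. -/
def pcells (μ : YoungDiagram) : Finset (ℕ × ℕ) :=
  μ.cells.image (fun p => (p.1 + 1, p.2 + 1))

/-- `prow μ i` is λ_i, the number of cells in the i-th row (1-indexed). -/
def prow (μ : YoungDiagram) (i : ℕ) : ℕ := μ.rowLen (i - 1)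

/-- `pcol μ j` is λ'_j, the number of cells in the j-th column (1-indexed). -/
def pcol (μ : YoungDiagram) (j : ℕ) : ℕ := μ.colLen (j - 1)

/-- The hook length h(i,j) = λ_i − i + λ'_j − j + 1 of a cell (1-indexed). -/
def hookP (μ : YoungDiagram) (i j : ℕ) : ℤ :=
  (prow μ i : ℤ) - i + (pcol μ j : ℤ) - j + 1

/-- The quantity d(i,j) of the paper (1-indexed cells). -/
def dP (μ : YoungDiagram) (i j : ℕ) : ℤ :=
  if i ≤ j then (prow μ i : ℤ) + (prow μ j : ℤ) - i - j + 1
  else -(pcol μ i : ℤ) - (pcol μ j : ℤ) + i + j - 1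

/-- The function Q_λ(r,q) of Wenzl, as in the paper. -/
noncomputable def Qpoly (μ : YoungDiagram) (r q : ℂ) : ℂ :=
  (∏ p ∈ (pcells μ).filter (fun p => p.1 = p.2),
      (r * q ^ ((prow μ p.2 : ℤ) - (pcol μ p.2 : ℤ))
        - r⁻¹ * q ^ (-(prow μ p.2 : ℤ) + (pcol μ p.2 : ℤ))
        + q ^ ((prow μ p.2 : ℤ) + (pcol μ p.2 : ℤ) - 2 * (p.2 : ℤ) + 1)
        - q ^ (-(prow μ p.2 : ℤ) - (pcol μ p.2 : ℤ) + 2 * (p.2 : ℤ) - 1))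
      / (q ^ hookP μ p.1 p.2 - q ^ (-hookP μ p.1 p.2)))
  *
  (∏ p ∈ (pcells μ).filter (fun p => p.1 ≠ p.2),
      (r * q ^ dP μ p.1 p.2 - r⁻¹ * q ^ (-dP μ p.1 p.2))
      / (q ^ hookP μ p.1 p.2 - q ^ (-hookP μ p.1 p.2)))

/-!
Replacing `q` by `-q` multiplies `q ^ k` by `(-1) ^ k`. In a diagonal factor the numerator and
the denominator of `Q_λ(r, -q)` both pick up the sign `(-1) ^ h`, and what remains is the factor
of `Q_λ(-r, q)`. An off-diagonal factor of `Q_λ(-r, q)` is `(-1) ^ (d + h + 1)` times that of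
`Q_λ(r, -q)`. This sign only depends on `m = max i j`, where it is `(-1) ^ (λ_m + λ'_m + 1)`,
and there are `2 (m - 1)` off-diagonal cells with `max i j = m` if `(m, m) ∈ λ`, and
`λ_m + λ'_m` of them otherwise; so the signs cancel. Hence `Q_λ(-r, q) = Q_λ(r, -q)` for all `r`.
-/

open Finset

section Signs

variable {K : Type*} [Field K]

lemma neg_one_zpow_congr {a b : ℤ} (h : Even (a - b)) : (-1 : K) ^ a = (-1) ^ b := by
  rw [← sub_add_cancel a b, zpow_add₀ (by norm_num), h.neg_one_zpow, one_mul]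

lemma neg_one_zpow_neg (k : ℤ) : (-1 : K) ^ (-k) = (-1) ^ k := by
  rw [zpow_neg, ← inv_zpow, inv_neg, inv_one]

lemma neg_one_zpow_mul_self (k : ℤ) : (-1 : K) ^ k * (-1) ^ k = 1 := by
  rw [← zpow_add₀ (by norm_num), Even.neg_one_zpow ⟨k, rfl⟩]

lemma neg_zpow_eq_neg_one_zpow_mul (x : K) (k : ℤ) : (-x) ^ k = (-1) ^ k * x ^ k := by
  rw [neg_eq_neg_one_mul, mul_zpow]

lemma mul_neg_zpow_sub_inv_mul_neg_zpow (r x : K) (k : ℤ) :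
    r * (-x) ^ k - r⁻¹ * (-x) ^ (-k) = (-1) ^ k * (r * x ^ k - r⁻¹ * x ^ (-k)) := by
  rw [neg_zpow_eq_neg_one_zpow_mul x, neg_zpow_eq_neg_one_zpow_mul x, neg_one_zpow_neg]
  ring

lemma neg_zpow_sub_neg_zpow_neg (x : K) (k : ℤ) :
    (-x) ^ k - (-x) ^ (-k) = (-1) ^ k * (x ^ k - x ^ (-k)) := by
  simpa using mul_neg_zpow_sub_inv_mul_neg_zpow 1 x k

lemma div_eq_mul_mul_div_mul {ε δ : K} (hε : ε * ε = 1) (hδ : δ * δ = 1) (X Y : K) :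
    X / Y = ε * δ * (ε * X / (δ * Y)) := by
  have hδinv : δ⁻¹ = δ := inv_eq_of_mul_eq_one_right hδ
  calc X / Y = (ε * ε) * (δ * δ) * (X / Y) := by rw [hε, hδ, one_mul, one_mul]
    _ = _ := by rw [div_mul_eq_div_div_swap, div_eq_mul_inv _ δ, hδinv]; ring

lemma offDiag_factor_neg (r q : K) (d h : ℤ) :
    (-r * q ^ d - (-r)⁻¹ * q ^ (-d)) / (q ^ h - q ^ (-h)) =
      (-1) ^ (d + h + 1) * ((r * (-q) ^ d - r⁻¹ * (-q) ^ (-d)) / ((-q) ^ h - (-q) ^ (-h))) := by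
  rw [mul_neg_zpow_sub_inv_mul_neg_zpow, neg_zpow_sub_neg_zpow_neg, zpow_add₀ (by norm_num),
    zpow_add₀ (by norm_num), zpow_one,
    div_eq_mul_mul_div_mul (neg_one_zpow_mul_self d) (neg_one_zpow_mul_self h)]
  ring

lemma diag_factor_neg (r q : K) {a b : ℤ} (hab : Odd (a + b)) :
    (-r * q ^ a - (-r)⁻¹ * q ^ (-a) + q ^ b - q ^ (-b)) / (q ^ b - q ^ (-b)) =
      (r * (-q) ^ a - r⁻¹ * (-q) ^ (-a) + (-q) ^ b - (-q) ^ (-b)) / ((-q) ^ b - (-q) ^ (-b)) := by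
  have hsign : (-1 : K) ^ a = -(-1) ^ b := by
    rw [neg_one_zpow_congr (b := b + 1) (by obtain ⟨k, hk⟩ := hab; exact ⟨k - b, by omega⟩),
      zpow_add_one₀ (by norm_num), mul_neg_one]
  simp only [neg_zpow_eq_neg_one_zpow_mul q, neg_one_zpow_neg, hsign]
  rw [← mul_div_mul_left _ _ (zpow_ne_zero b (by norm_num : (-1 : K) ≠ 0))]
  congr 1 <;> ring

end Signs

section PaperCoordinates

variable (μ : YoungDiagram)

lemma mem_pcells_iff {i j : ℕ} :
    (i, j) ∈ pcells μ ↔ 1 ≤ i ∧ 1 ≤ j ∧ (i - 1, j - 1) ∈ μ := by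
  simp only [pcells, mem_image, YoungDiagram.mem_cells, Prod.ext_iff]
  constructor
  · rintro ⟨⟨a, b⟩, hab, rfl, rfl⟩
    exact ⟨by omega, by omega, hab⟩
  · rintro ⟨hi, hj, hij⟩
    exact ⟨(i - 1, j - 1), hij, by omega, by omega⟩

lemma mem_pcells_iff_le_prow {i j : ℕ} : (i, j) ∈ pcells μ ↔ 1 ≤ i ∧ 1 ≤ j ∧ j ≤ prow μ i := by
  rw [mem_pcells_iff, YoungDiagram.mem_iff_lt_rowLen, prow]
  omega

lemma mem_pcells_iff_le_pcol {i j : ℕ} : (i, j) ∈ pcells μ ↔ 1 ≤ i ∧ 1 ≤ j ∧ i ≤ pcol μ j := by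
  rw [mem_pcells_iff, YoungDiagram.mem_iff_lt_colLen, pcol]
  omega

lemma le_prow_self_iff_le_pcol_self (m : ℕ) : m ≤ prow μ m ↔ m ≤ pcol μ m := by
  have := (mem_pcells_iff_le_prow μ (i := m) (j := m)).symm.trans (mem_pcells_iff_le_pcol μ)
  rcases m with _ | m
  · simp
  · simpa using this

lemma filter_max_eq_filter_ne_pcells (m : ℕ) :
    {p ∈ {p ∈ pcells μ | p.1 ≠ p.2} | max p.1 p.2 = m} =
      Icc 1 (min (m - 1) (pcol μ m)) ×ˢ {m} ∪ {m} ×ˢ Icc 1 (min (m - 1) (prow μ m)) := by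
  ext ⟨i, j⟩
  simp only [mem_filter, mem_union, mem_product, mem_Icc, mem_singleton]
  rcases lt_trichotomy i j with h | rfl | h
  · rw [mem_pcells_iff_le_pcol, max_eq_right h.le]
    rcases eq_or_ne j m with rfl | hjm <;> omega
  · omega
  · rw [mem_pcells_iff_le_prow, max_eq_left h.le]
    rcases eq_or_ne i m with rfl | him <;> omega

lemma card_filter_max_eq_filter_ne_pcells (m : ℕ) :
    #{p ∈ {p ∈ pcells μ | p.1 ≠ p.2} | max p.1 p.2 = m} =
      min (m - 1) (pcol μ m) + min (m - 1) (prow μ m) := by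
  rw [filter_max_eq_filter_ne_pcells, card_union_of_disjoint, card_product, card_product,
    card_singleton, Nat.card_Icc, Nat.card_Icc]
  · omega
  · rw [disjoint_left]
    simp only [mem_product, mem_Icc, mem_singleton]
    omega

lemma even_card_filter_max_eq_filter_ne_pcells_mul (m : ℕ) :
    Even (#{p ∈ {p ∈ pcells μ | p.1 ≠ p.2} | max p.1 p.2 = m} * (prow μ m + pcol μ m + 1)) := by
  rw [card_filter_max_eq_filter_ne_pcells]
  by_cases hm : m ≤ prow μ m
  · have := (le_prow_self_iff_le_pcol_self μ m).mp hm
    rw [min_eq_left (by omega), min_eq_left (by omega)]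
    exact Even.mul_right ⟨_, rfl⟩ _
  · have := (le_prow_self_iff_le_pcol_self μ m).not.mp hm
    rw [min_eq_right (by omega), min_eq_right (by omega), add_comm (pcol μ m)]
    exact Nat.even_mul_succ_self _

lemma even_dP_add_hookP_sub (i j : ℕ) :
    Even (dP μ i j + hookP μ i j - (prow μ (max i j) + pcol μ (max i j))) := by
  rw [Int.even_iff, dP, hookP]
  rcases le_total i j with h | h
  · rw [if_pos h, max_eq_right h]
    omega
  · rcases h.eq_or_lt with rfl | h
    · simp only [le_refl, if_true, max_self]
      omega
    · rw [if_neg (by omega), max_eq_left h.le]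
      omega

lemma prod_neg_one_zpow_dP_add_hookP_add_one {K : Type*} [Field K] :
    ∏ p ∈ (pcells μ).filter (fun p => p.1 ≠ p.2),
      (-1 : K) ^ (dP μ p.1 p.2 + hookP μ p.1 p.2 + 1) = 1 := by
  calc _ = ∏ p ∈ (pcells μ).filter (fun p => p.1 ≠ p.2),
        (-1 : K) ^ (prow μ (max p.1 p.2) + pcol μ (max p.1 p.2) + 1) := by
        refine prod_congr rfl fun p _ => ?_
        rw [← zpow_natCast]
        refine neg_one_zpow_congr ?_
        push_cast
        convert even_dP_add_hookP_sub μ p.1 p.2 using 1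
        ring
    _ = 1 := by
        refine (prod_comp (fun m => (-1 : K) ^ (prow μ m + pcol μ m + 1))
          fun p : ℕ × ℕ => max p.1 p.2).trans ?_
        refine prod_eq_one fun m _ => ?_
        rw [← pow_mul, mul_comm, (even_card_filter_max_eq_filter_ne_pcells_mul μ m).neg_one_pow]

end PaperCoordinates

theorem Qpoly_neg_left (μ : YoungDiagram) (r q : ℂ) : Qpoly μ (-r) q = Qpoly μ r (-q) := by
  rw [Qpoly, Qpoly]
  congr 1
  · refine prod_congr rfl fun p hp => ?_
    have hdiag : p.1 = p.2 := (mem_filter.mp hp).2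
    have hhook : hookP μ p.1 p.2 = prow μ p.2 + pcol μ p.2 - 2 * p.2 + 1 := by
      rw [hookP, hdiag]
      ring
    rw [hhook, show -(prow μ p.2 : ℤ) + pcol μ p.2 = -(prow μ p.2 - pcol μ p.2) by ring,
      show -(prow μ p.2 : ℤ) - pcol μ p.2 + 2 * p.2 - 1 =
        -(prow μ p.2 + pcol μ p.2 - 2 * p.2 + 1) by ring]
    exact diag_factor_neg r q ⟨prow μ p.2 - p.2, by ring⟩
  · rw [prod_congr rfl fun p _ => offDiag_factor_neg r q _ _, prod_mul_distrib,
      prod_neg_one_zpow_dP_add_hookP_add_one, one_mul]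

theorem stmt0_general (n : ℕ) (q : ℂ) (μ : YoungDiagram) :
    Qpoly μ (-(q ^ (2 * n))) q = Qpoly μ (q ^ (2 * n)) (-q) :=
  Qpoly_neg_left μ _ q

/-- Q_λ(−q^{2n}, q) = Q_λ(q^{2n}, −q) for q nonzero and not a root of unity. -/
theorem stmt0 (n : ℕ) (hn : 1 ≤ n) (q : ℂ) (hq0 : q ≠ 0)
    (hq : ∀ m : ℕ, 1 ≤ m → q ^ m ≠ 1) (μ : YoungDiagram) :
    Qpoly μ (-(q ^ (2 * n))) q = Qpoly μ (q ^ (2 * n)) (-q) :=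
  stmt0_general n q μ
end

section
/- Let n ≥ 1 be an integer, let q ∈ ℂ be nonzero and not a root of unity, and let λ be a Young diagram satisfying λ'_1 + λ'_2 ≤ 2n + 1. Then Q_λ(−q^{2n}, q) ≠ 0. -/
/-!
Put r = −q^{2n}. Each off-diagonal numerator is q^{−(2n+d)} − q^{2n+d}, which vanishes only when
2n + d = 0; the column bound gives λ'_2 ≤ n, and from that 2n + d ≥ 1 both above and below the
diagonal. A diagonal numerator factors as (q^A − q^B)(1 + q^{−A−B}) with A − B odd, so it never
vanishes. Hook lengths are positive, so the denominators are nonzero as well.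
-/

open scoped BigOperators

open Function

section NotRootOfUnity

variable {K : Type*} [Field K] {q : K}

theorem zpow_injective_of_not_isOfFinOrder (hq0 : q ≠ 0) (hq : ¬IsOfFinOrder q) :
    Injective fun k : ℤ => q ^ k := by
  intro a b hab
  by_contra hne
  simp only at hab
  refine hq (isOfFinOrder_iff_zpow_eq_one.mpr ⟨a - b, sub_ne_zero.mpr hne, ?_⟩)
  rw [zpow_sub₀ hq0, hab, div_self (zpow_ne_zero _ hq0)]

theorem zpow_ne_neg_one_of_not_isOfFinOrder [CharZero K] (hq0 : q ≠ 0) (hq : ¬IsOfFinOrder q)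
    (c : ℤ) : q ^ c ≠ -1 := by
  intro hc
  have hc0 : c * 2 = 0 :=
    zpow_injective_of_not_isOfFinOrder hq0 hq (by simp [zpow_mul, hc])
  obtain rfl : c = 0 := by omega
  norm_num at hc

theorem zpow_sub_zpow_neg_ne_zero (hq0 : q ≠ 0) (hq : ¬IsOfFinOrder q) {k : ℤ} (hk : k ≠ 0) :
    q ^ k - q ^ (-k) ≠ 0 :=
  sub_ne_zero.mpr fun h => hk (by have := zpow_injective_of_not_isOfFinOrder hq0 hq h; omega)

theorem offDiag_factor_ne_zero (hq0 : q ≠ 0) (hq : ¬IsOfFinOrder q) {N d : ℤ} (h : N + d ≠ 0) :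
    -q ^ N * q ^ d - (-q ^ N)⁻¹ * q ^ (-d) ≠ 0 := by
  have hfactor : -q ^ N * q ^ d - (-q ^ N)⁻¹ * q ^ (-d) = -(q ^ (N + d) - q ^ (-(N + d))) := by
    rw [inv_neg, ← zpow_neg, neg_add, zpow_add₀ hq0, zpow_add₀ hq0]
    ring
  rw [hfactor, neg_ne_zero]
  exact zpow_sub_zpow_neg_ne_zero hq0 hq h

theorem diag_factor_eq_mul (hq0 : q ≠ 0) (N x A : ℤ) :
    -q ^ N * q ^ x - (-q ^ N)⁻¹ * q ^ (-x) + q ^ A - q ^ (-A)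
      = (q ^ A - q ^ (N + x)) * (1 + q ^ (-A - (N + x))) := by
  have hN := zpow_ne_zero N hq0
  have hx := zpow_ne_zero x hq0
  have hA := zpow_ne_zero A hq0
  simp only [zpow_neg, zpow_add₀ hq0, zpow_sub₀ hq0, inv_neg]
  field_simp
  ring

theorem diag_factor_ne_zero [CharZero K] (hq0 : q ≠ 0) (hq : ¬IsOfFinOrder q) {N x A : ℤ}
    (h : A ≠ N + x) : -q ^ N * q ^ x - (-q ^ N)⁻¹ * q ^ (-x) + q ^ A - q ^ (-A) ≠ 0 := by
  rw [diag_factor_eq_mul hq0]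
  refine mul_ne_zero (sub_ne_zero.mpr fun hAB => h (zpow_injective_of_not_isOfFinOrder hq0 hq hAB))
    fun h1 => zpow_ne_neg_one_of_not_isOfFinOrder hq0 hq _ (eq_neg_of_add_eq_zero_right h1)

end NotRootOfUnity

section YoungDiagram

variable {μ : YoungDiagram} {a b : ℕ}

theorem prow_succ (μ : YoungDiagram) (i : ℕ) : prow μ (i + 1) = μ.rowLen i := rfl

theorem pcol_succ (μ : YoungDiagram) (j : ℕ) : pcol μ (j + 1) = μ.colLen j := rfl

theorem forall_mem_pcells_filter {P : ℕ × ℕ → Prop} [DecidablePred P] {f : ℕ × ℕ → Prop}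
    (h : ∀ a b, (a, b) ∈ μ → P (a + 1, b + 1) → f (a + 1, b + 1)) :
    ∀ p ∈ (pcells μ).filter P, f p := by
  intro p hp
  obtain ⟨hp, hP⟩ := Finset.mem_filter.mp hp
  obtain ⟨⟨a, b⟩, hab, rfl⟩ := Finset.mem_image.mp hp
  exact h a b hab hP

theorem hookP_pos (h : (a, b) ∈ μ) : 0 < hookP μ (a + 1) (b + 1) := by
  have hb := μ.mem_iff_lt_rowLen.mp h
  have ha := μ.mem_iff_lt_colLen.mp h
  simp only [hookP, prow_succ, pcol_succ]
  push_cast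
  omega

theorem two_mul_add_dP_pos {n : ℕ} (hcols : pcol μ 1 + pcol μ 2 ≤ 2 * n + 1) (h : (a, b) ∈ μ)
    (hab : a ≠ b) : 0 < 2 * (n : ℤ) + dP μ (a + 1) (b + 1) := by
  have hcol₀ : μ.colLen 1 ≤ μ.colLen 0 := μ.colLen_anti 0 1 zero_le_one
  have hcols' : μ.colLen 0 + μ.colLen 1 ≤ 2 * n + 1 := hcols
  rcases hab.lt_or_gt with hlt | hgt
  · have ha : a < μ.colLen b := μ.mem_iff_lt_colLen.mp h
    have hb : b < μ.rowLen a := μ.mem_iff_lt_rowLen.mp h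
    have hcol_b : μ.colLen b ≤ μ.colLen 1 := μ.colLen_anti 1 b (by omega)
    simp only [dP, prow_succ, if_pos (Nat.succ_le_succ hlt.le)]
    push_cast
    omega
  · have hcol_a : μ.colLen a ≤ μ.colLen 1 := μ.colLen_anti 1 a (by omega)
    have hcol_b : μ.colLen b ≤ μ.colLen 0 := μ.colLen_anti 0 b (Nat.zero_le b)
    simp only [dP, pcol_succ, if_neg (by omega : ¬a + 1 ≤ b + 1)]
    push_cast
    omega

end YoungDiagram

theorem stmt1_general (n : ℕ) (q : ℂ) (hq0 : q ≠ 0)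
    (hq : ∀ m : ℕ, 1 ≤ m → q ^ m ≠ 1) (μ : YoungDiagram)
    (hcols : pcol μ 1 + pcol μ 2 ≤ 2 * n + 1) :
    Qpoly μ (-(q ^ (2 * n))) q ≠ 0 := by
  have hfin : ¬IsOfFinOrder q := fun h =>
    let ⟨m, hm, hqm⟩ := h.exists_pow_eq_one
    hq m hm hqm
  rw [Qpoly, ← zpow_natCast, Nat.cast_mul, Nat.cast_two]
  refine mul_ne_zero
    (Finset.prod_ne_zero_iff.mpr <| forall_mem_pcells_filter fun a b hab hdiag => ?_)
    (Finset.prod_ne_zero_iff.mpr <| forall_mem_pcells_filter fun a b hab hoff => ?_) <;>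
    refine div_ne_zero ?_ (zpow_sub_zpow_neg_ne_zero hq0 hfin (hookP_pos hab).ne')
  · obtain rfl : a = b := by simpa using hdiag
    rw [prow_succ, pcol_succ]
    convert diag_factor_ne_zero hq0 hfin (N := 2 * n) (x := μ.rowLen a - μ.colLen a)
      (A := μ.rowLen a + μ.colLen a - 2 * (a + 1 : ℕ) + 1) (by omega) using 6 <;> push_cast <;> ring
  · exact offDiag_factor_ne_zero hq0 hfin (two_mul_add_dP_pos hcols hab (by simpa using hoff)).ne'

/-- if λ'_1 + λ'_2 ≤ 2n + 1 then Q_λ(−q^{2n}, q) ≠ 0. -/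
theorem stmt1 (n : ℕ) (hn : 1 ≤ n) (q : ℂ) (hq0 : q ≠ 0)
    (hq : ∀ m : ℕ, 1 ≤ m → q ^ m ≠ 1) (μ : YoungDiagram)
    (hcols : pcol μ 1 + pcol μ 2 ≤ 2 * n + 1) :
    Qpoly μ (-(q ^ (2 * n))) q ≠ 0 :=
  stmt1_general n q hq0 hq μ hcols
end

section
/- Let n ≥ 1 be an integer, let q ∈ ℂ be nonzero and not a root of unity, and let λ be a Young diagram satisfying λ'_1 + λ'_2 = 2n + 2. Then Q_λ(−q^{2n}, q) = 0. -/
open scoped BigOperators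

/-- if λ'_1 + λ'_2 = 2n + 2 then Q_λ(−q^{2n}, q) = 0. -/
theorem stmt2 (n : ℕ) (hn : 1 ≤ n) (q : ℂ) (hq0 : q ≠ 0)
    (hq : ∀ m : ℕ, 1 ≤ m → q ^ m ≠ 1) (μ : YoungDiagram)
    (hcols : pcol μ 1 + pcol μ 2 = 2 * n + 2) :
    Qpoly μ (-(q ^ (2 * n))) q = 0 := by
  have hcol1 : 2 ≤ pcol μ 1 := by
    have hanti : pcol μ 2 ≤ pcol μ 1 := by
      simpa [pcol] using μ.colLen_anti 0 1 (by norm_num)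
    omega
  have hmem : ((2 : ℕ), (1 : ℕ)) ∈ (pcells μ).filter (fun p => p.1 ≠ p.2) := by
    simp only [Finset.mem_filter, pcells, Finset.mem_image]
    refine ⟨⟨(1, 0), ?_, rfl⟩, by decide⟩
    rw [YoungDiagram.mem_cells, YoungDiagram.mem_iff_lt_colLen]
    exact hcol1
  have hd : dP μ 2 1 = -(2 * n : ℤ) := by
    simp only [dP, if_neg (by norm_num : ¬ (2 : ℕ) ≤ 1)]
    push_cast
    omega
  have hzero : ((-(q ^ (2 * n))) * q ^ dP μ 2 1
      - (-(q ^ (2 * n)))⁻¹ * q ^ (-dP μ 2 1))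
      / (q ^ hookP μ 2 1 - q ^ (-hookP μ 2 1)) = 0 := by
    rw [hd]
    have h1 : (-(q ^ (2 * n))) * q ^ (-(2 * n : ℤ)) = -1 := by
      rw [← zpow_natCast q (2 * n)]
      rw [neg_mul, ← zpow_add₀ hq0]
      simp
    have h2 : (-(q ^ (2 * n)))⁻¹ * q ^ (-(-(2 * n : ℤ))) = -1 := by
      rw [neg_neg, ← zpow_natCast q (2 * n), inv_neg, ← zpow_neg, neg_mul,
        ← zpow_add₀ hq0]
      simp
    rw [h1, h2]
    simp
  unfold Qpoly
  rw [Finset.prod_eq_zero hmem hzero, mul_zero]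
end

section
/- For every Young diagram λ, the number of off-diagonal cells, #{(i,j) ∈ λ : i ≠ j}, is congruent modulo 2 to Σ_{(i,j)∈λ, i<j} (λ'_j + λ_j) + Σ_{(i,j)∈λ, i>j} (λ_i + λ'_i). Equivalently, ∏_{(i,j)∈λ, i≠j} (−1) = (∏_{(i,j)∈λ, i<j} (−1)^{λ'_j + λ_j}) · (∏_{(i,j)∈λ, i>j} (−1)^{λ_i + λ'_i}). -/
open scoped BigOperators

/-! Group the off-diagonal cells by `m = max i j`: they form the hook at the diagonal position
`(m, m)` with the corner removed, which has `min λ'_m (m - 1) + min λ_m (m - 1)` cells. Each cell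
contributes `λ_m + λ'_m + 1` to the difference of the two sides, so it suffices that every
`(min λ'_m (m - 1) + min λ_m (m - 1)) * (λ_m + λ'_m + 1)` is even. If `(m, m) ∈ λ` the first
factor is `2 (m - 1)`; otherwise both minima are attained by `λ'_m` and `λ_m`, and the product
has the form `n (n + 1)`. -/

open Finset

namespace YoungDiagram

variable (μ : YoungDiagram)

theorem card_filter_snd_lt_fst_and_fst_eq (m : ℕ) :
    #{c ∈ μ.cells | c.2 < c.1 ∧ c.1 = m} = min (μ.rowLen m) m := by
  have : {c ∈ μ.cells | c.2 < c.1 ∧ c.1 = m} = {m} ×ˢ range (min (μ.rowLen m) m) := by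
    ext ⟨i, j⟩
    simp only [mem_filter, mem_cells, mem_iff_lt_rowLen, mem_product, mem_singleton, mem_range]
    constructor
    · rintro ⟨hj, hji, rfl⟩; omega
    · rintro ⟨rfl, hj⟩; omega
  rw [this, card_product, card_singleton, card_range, one_mul]

theorem sum_filter_snd_lt_fst {M : Type*} [AddCommMonoid M] (f : ℕ → M) {N : ℕ}
    (hN : μ.colLen 0 ≤ N) :
    ∑ c ∈ μ.cells with c.2 < c.1, f c.1 = ∑ m ∈ range N, min (μ.rowLen m) m • f m := by
  have hmaps : ∀ c ∈ μ.cells.filter (fun c => c.2 < c.1), c.1 ∈ range N := by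
    intro c hc
    have : (c.1, 0) ∈ μ := μ.up_left_mem le_rfl (Nat.zero_le _) (mem_filter.1 hc).1
    rw [mem_iff_lt_colLen] at this
    exact mem_range.2 (this.trans_le hN)
  rw [← sum_fiberwise_of_maps_to' hmaps]
  refine sum_congr rfl fun m _ => ?_
  rw [sum_const, filter_filter, card_filter_snd_lt_fst_and_fst_eq]

theorem sum_filter_fst_lt_snd {M : Type*} [AddCommMonoid M] (f : ℕ → M) {N : ℕ}
    (hN : μ.rowLen 0 ≤ N) :
    ∑ c ∈ μ.cells with c.1 < c.2, f c.2 = ∑ m ∈ range N, min (μ.colLen m) m • f m := by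
  simp_rw [← rowLen_transpose]
  rw [← μ.transpose.sum_filter_snd_lt_fst f (by rwa [colLen_transpose])]
  exact sum_equiv (Equiv.prodComm ℕ ℕ) (fun c => by simp [mem_transpose]) (fun _ _ => rfl)

theorem even_min_add_min_mul_succ (m : ℕ) :
    Even ((min (μ.colLen m) m + min (μ.rowLen m) m) * (μ.colLen m + μ.rowLen m + 1)) := by
  by_cases hm : (m, m) ∈ μ
  · have hcol := mem_iff_lt_colLen.1 hm
    have hrow := mem_iff_lt_rowLen.1 hm
    rw [min_eq_right hcol.le, min_eq_right hrow.le]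
    exact (Even.add_self m).mul_right _
  · have hcol : μ.colLen m ≤ m := not_lt.1 (mt mem_iff_lt_colLen.2 hm)
    have hrow : μ.rowLen m ≤ m := not_lt.1 (mt mem_iff_lt_rowLen.2 hm)
    rw [min_eq_left hcol, min_eq_left hrow]
    exact Nat.even_mul_succ_self _

theorem card_filter_fst_ne_snd_mod_two :
    #{c ∈ μ.cells | c.1 ≠ c.2} % 2
      = (∑ c ∈ μ.cells with c.1 < c.2, (μ.colLen c.2 + μ.rowLen c.2)
          + ∑ c ∈ μ.cells with c.2 < c.1, (μ.rowLen c.1 + μ.colLen c.1)) % 2 := by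
  set N := μ.rowLen 0 + μ.colLen 0
  have hcard : #{c ∈ μ.cells | c.1 ≠ c.2}
      = #{c ∈ μ.cells | c.1 < c.2} + #{c ∈ μ.cells | c.2 < c.1} := by
    rw [← card_union_of_disjoint (disjoint_filter.2 fun _ _ h => h.not_gt), ← filter_or]
    simp_rw [ne_iff_lt_or_gt]
  have hsum : #{c ∈ μ.cells | c.1 ≠ c.2}
      + (∑ c ∈ μ.cells with c.1 < c.2, (μ.colLen c.2 + μ.rowLen c.2)
          + ∑ c ∈ μ.cells with c.2 < c.1, (μ.rowLen c.1 + μ.colLen c.1))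
      = ∑ m ∈ range N, (min (μ.colLen m) m + min (μ.rowLen m) m)
          * (μ.colLen m + μ.rowLen m + 1) := by
    rw [hcard, card_eq_sum_ones, card_eq_sum_ones, add_add_add_comm, ← sum_add_distrib,
      ← sum_add_distrib, μ.sum_filter_fst_lt_snd (fun m => 1 + (μ.colLen m + μ.rowLen m)) le_self_add,
      μ.sum_filter_snd_lt_fst (fun m => 1 + (μ.rowLen m + μ.colLen m)) le_add_self,
      ← sum_add_distrib]
    refine sum_congr rfl fun m _ => ?_
    simp only [smul_eq_mul]
    ring
  obtain ⟨k, hk⟩ : Even (∑ m ∈ range N, _) := even_sum _ fun m _ => μ.even_min_add_min_mul_succ m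
  rw [← hsum] at hk
  omega

end YoungDiagram

/-- the number of off-diagonal cells of λ is congruent mod 2 to
Σ_{(i,j)∈λ, i<j} (λ'_j + λ_j) + Σ_{(i,j)∈λ, i>j} (λ_i + λ'_i). -/
theorem stmt5 (μ : YoungDiagram) :
    ((pcells μ).filter (fun p => p.1 ≠ p.2)).card % 2
      = ((∑ p ∈ (pcells μ).filter (fun p => p.1 < p.2), (pcol μ p.2 + prow μ p.2))
          + ∑ p ∈ (pcells μ).filter (fun p => p.2 < p.1), (prow μ p.1 + pcol μ p.1)) % 2 := by
  have hshift : Function.Injective fun c : ℕ × ℕ => (c.1 + 1, c.2 + 1) := fun c d h => by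
    simpa [Prod.ext_iff] using h
  simp only [pcells, prow, pcol, filter_image, card_image_of_injective _ hshift,
    sum_image fun c _ d _ h => hshift h, ne_eq, Nat.add_right_cancel_iff, add_lt_add_iff_right,
    Nat.add_sub_cancel]
  exact μ.card_filter_fst_ne_snd_mod_two
end

section
/- Let n ≥ 1 and let μ be an integral dominant weight. Then for all α, β ∈ P⁰_μ, the equality (α + 2ρ, α) = (β + 2ρ, β) implies α = β. -/
/-!
Along the segment `μ - ε_i, μ, μ + ε_i` the Casimir value `(ν + 2ρ, ν)` changes by
`c(μ ± ε_i) - c(μ) = ±2 (μ_i + n - i) + (1 ∓ 1)` (with `i` counted from `0`). For dominant `μ`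
the raising steps strictly increase it and the admissible lowering steps (those with `μ_i ≥ 1`)
strictly decrease it, so weights of different types are separated; within one type the steps are
told apart because `i ↦ μ_i - i` is strictly decreasing.
-/

open scoped BigOperators

/-- A weight μ = Σ μ_i ε_i (coordinates, 0-indexed) is integral dominant if
μ_1 ≥ μ_2 ≥ … ≥ μ_n ≥ 0. -/
def IntegralDominant (n : ℕ) (μ : Fin n → ℤ) : Prop :=
  (∀ i j : Fin n, i ≤ j → μ j ≤ μ i) ∧ ∀ i : Fin n, 0 ≤ μ i

/-- P⁰_μ: the set consisting of μ together with those weights μ ± ε_i that are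
integral dominant. -/
def P0 (n : ℕ) (μ : Fin n → ℤ) : Set (Fin n → ℤ) :=
  {ν | IntegralDominant n ν ∧
    (ν = μ ∨ ∃ i : Fin n,
      ν = Function.update μ i (μ i + 1) ∨ ν = Function.update μ i (μ i - 1))}

/-- The pairing (2ρ, ν) = Σ_{i=1}^n (2n − 2i + 1) ν_i (0-indexed coordinates). -/
def pairTwoRho (n : ℕ) (ν : Fin n → ℤ) : ℤ :=
  ∑ i : Fin n, (2 * (n : ℤ) - 2 * (((i : ℕ) : ℤ) + 1) + 1) * ν i

/-- The pairing (ν + 2ρ, ν) = (ν, ν) + (2ρ, ν). -/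
def pairCasimir (n : ℕ) (ν : Fin n → ℤ) : ℤ :=
  (∑ i : Fin n, ν i * ν i) + pairTwoRho n ν

open Function

theorem Finset.sum_apply_update_sub_sum {ι α M : Type*} [Fintype ι] [DecidableEq ι]
    [AddCommGroup M] (g : ι → α → M) (f : ι → α) (i : ι) (b : α) :
    ∑ j, g j (update f i b j) - ∑ j, g j (f j) = g i b - g i (f i) := by
  rw [← Finset.sum_sub_distrib, Finset.sum_eq_single i (fun j _ hj => by simp [hj]) (by simp),
    update_self]

section Casimir

variable {n : ℕ}

theorem pairCasimir_update_sub (μ : Fin n → ℤ) (i : Fin n) (v : ℤ) :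
    pairCasimir n (update μ i v) - pairCasimir n μ =
      v * v - μ i * μ i + (2 * (n : ℤ) - 2 * (((i : ℕ) : ℤ) + 1) + 1) * (v - μ i) := by
  rw [pairCasimir, pairCasimir, pairTwoRho, pairTwoRho, add_sub_add_comm,
    Finset.sum_apply_update_sub_sum (fun _ x => x * x),
    Finset.sum_apply_update_sub_sum
      (fun (j : Fin n) x => (2 * (n : ℤ) - 2 * (((j : ℕ) : ℤ) + 1) + 1) * x)]
  ring

theorem pairCasimir_update_add_one (μ : Fin n → ℤ) (i : Fin n) :
    pairCasimir n (update μ i (μ i + 1)) = pairCasimir n μ + 2 * (μ i + n - i) := by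
  linear_combination pairCasimir_update_sub μ i (μ i + 1)

theorem pairCasimir_update_sub_one (μ : Fin n → ℤ) (i : Fin n) :
    pairCasimir n (update μ i (μ i - 1)) = pairCasimir n μ - 2 * (μ i + n - i - 1) := by
  linear_combination pairCasimir_update_sub μ i (μ i - 1)

theorem pairCasimir_lt_update_add_one {μ : Fin n → ℤ} {i : Fin n} (hi : 0 ≤ μ i) :
    pairCasimir n μ < pairCasimir n (update μ i (μ i + 1)) := by
  rw [pairCasimir_update_add_one]
  have := i.isLt
  omega

theorem pairCasimir_update_sub_one_lt {μ : Fin n → ℤ} {i : Fin n} (hi : 0 < μ i) :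
    pairCasimir n (update μ i (μ i - 1)) < pairCasimir n μ := by
  rw [pairCasimir_update_sub_one]
  have := i.isLt
  omega

theorem strictAnti_sub_val {μ : Fin n → ℤ} (hμ : Antitone μ) :
    StrictAnti fun i : Fin n => μ i - (i : ℤ) := fun i j hij => by
  show μ j - j < μ i - i
  have := hμ hij.le
  have : (i : ℕ) < j := hij
  omega

theorem injective_pairCasimir_update_add_one {μ : Fin n → ℤ} (hμ : Antitone μ) :
    Injective fun i => pairCasimir n (update μ i (μ i + 1)) := fun i j h => by
  simp only [pairCasimir_update_add_one] at h
  exact (strictAnti_sub_val hμ).injective (by omega)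

theorem injective_pairCasimir_update_sub_one {μ : Fin n → ℤ} (hμ : Antitone μ) :
    Injective fun i => pairCasimir n (update μ i (μ i - 1)) := fun i j h => by
  simp only [pairCasimir_update_sub_one] at h
  exact (strictAnti_sub_val hμ).injective (by omega)

theorem eq_or_update_of_mem_P0 {μ ν : Fin n → ℤ} (hν : ν ∈ P0 n μ) :
    ν = μ ∨ (∃ i, ν = update μ i (μ i + 1)) ∨ ∃ i, 0 < μ i ∧ ν = update μ i (μ i - 1) := by
  obtain ⟨hdom, rfl | ⟨i, rfl | rfl⟩⟩ := hν
  · exact .inl rfl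
  · exact .inr (.inl ⟨i, rfl⟩)
  · have := hdom.2 i
    rw [update_self] at this
    exact .inr (.inr ⟨i, by omega, rfl⟩)

end Casimir

theorem stmt13_general (n : ℕ) (μ : Fin n → ℤ) (hμ : IntegralDominant n μ)
    (α β : Fin n → ℤ) (hα : α ∈ P0 n μ) (hβ : β ∈ P0 n μ)
    (h : pairCasimir n α = pairCasimir n β) : α = β := by
  have up (i : Fin n) := pairCasimir_lt_update_add_one (hμ.2 i)
  rcases eq_or_update_of_mem_P0 hα with rfl | ⟨i, rfl⟩ | ⟨i, hi, rfl⟩ <;>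
    rcases eq_or_update_of_mem_P0 hβ with rfl | ⟨j, rfl⟩ | ⟨j, hj, rfl⟩
  · rfl
  · exact absurd h (up j).ne
  · exact absurd h (pairCasimir_update_sub_one_lt hj).ne'
  · exact absurd h (up i).ne'
  · rw [injective_pairCasimir_update_add_one hμ.1 h]
  · exact absurd h ((pairCasimir_update_sub_one_lt hj).trans (up _)).ne'
  · exact absurd h (pairCasimir_update_sub_one_lt hi).ne
  · exact absurd h ((pairCasimir_update_sub_one_lt hi).trans (up _)).ne
  · rw [injective_pairCasimir_update_sub_one hμ.1 h]

/-- for α, β ∈ P⁰_μ, (α + 2ρ, α) = (β + 2ρ, β) implies α = β. -/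
theorem stmt13 (n : ℕ) (hn : 1 ≤ n) (μ : Fin n → ℤ) (hμ : IntegralDominant n μ)
    (α β : Fin n → ℤ) (hα : α ∈ P0 n μ) (hβ : β ∈ P0 n μ)
    (h : pairCasimir n α = pairCasimir n β) : α = β :=
  stmt13_general n μ hμ α β hα hβ h
end

section
/- Let n ≥ 1 and let q ∈ ℂ be nonzero and not a root of unity. Then (−1) · q^{−(2ρ, ε_1)} · ∏_{α ∈ Φ̄⁺₀} (q^{2(ε_1 + ρ, α)} − 1)/(q^{2(ρ, α)} − 1) · ∏_{β ∈ Φ⁺₁} (q^{2(ε_1 + ρ, β)} + 1)/(q^{2(ρ, β)} + 1) = 1 − (q^{2n} − q^{−2n})/(q − q^{−1}). (All exponents appearing here are integers, and all denominators are nonzero since q is not a root of unity.) -/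
open scoped BigOperators

/-- Standard basis vector ε_i of ℤⁿ (0-indexed: `epsZ n i` is ε_{i+1}). -/
def epsZ (n : ℕ) (i : Fin n) : Fin n → ℤ := Pi.single i 1

/-- The standard inner product on ℤⁿ. -/
def ipZ (n : ℕ) (x y : Fin n → ℤ) : ℤ := ∑ k : Fin n, x k * y k

/-- 2ρ = Σ_{i=1}^n (2n − 2i + 1) ε_i in coordinates (0-indexed). -/
def twoRhoZ (n : ℕ) : Fin n → ℤ := fun i => 2 * (n : ℤ) - 2 * (((i : ℕ) : ℤ) + 1) + 1

lemma ipZ_right (n : ℕ) (x : Fin n → ℤ) (i : Fin n) : ipZ n x (epsZ n i) = x i := by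
  simp [ipZ, epsZ, Pi.single_apply, mul_ite]

lemma ipZ_sub (n : ℕ) (x y z : Fin n → ℤ) : ipZ n x (y - z) = ipZ n x y - ipZ n x z := by
  simp [ipZ, mul_sub, Finset.sum_sub_distrib]

lemma ipZ_add (n : ℕ) (x y z : Fin n → ℤ) : ipZ n x (y + z) = ipZ n x y + ipZ n x z := by
  simp [ipZ, mul_add, Finset.sum_add_distrib]

lemma zpow_ne_one' {q : ℂ} (hq : ∀ m : ℕ, 1 ≤ m → q ^ m ≠ 1)
    {m : ℤ} (hm : m ≠ 0) : q ^ m ≠ 1 := by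
  rcases lt_or_gt_of_ne hm with h | h
  · intro he
    have h2 : q ^ (-m) = 1 := by rw [zpow_neg, he, inv_one]
    have hm' : (1:ℕ) ≤ (-m).toNat := by omega
    have := hq (-m).toNat hm'
    rw [← zpow_natCast, Int.toNat_of_nonneg (by omega)] at this
    exact this h2
  · intro he
    have hm' : (1:ℕ) ≤ m.toNat := by omega
    have := hq m.toNat hm'
    rw [← zpow_natCast, Int.toNat_of_nonneg (by omega)] at this
    exact this he

lemma zpow_ne_negone' {q : ℂ} (hq : ∀ m : ℕ, 1 ≤ m → q ^ m ≠ 1)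
    {m : ℤ} (hm : m ≠ 0) : q ^ m ≠ -1 := by
  intro he
  have h2 : q ^ (2 * m) = 1 := by rw [mul_comm, zpow_mul, he]; norm_num
  exact zpow_ne_one' hq (by omega) h2

lemma tele (c : ℕ → ℂ) (m : ℕ) (hc : ∀ j ≤ m, c j ≠ 0) :
    ∏ j ∈ Finset.range m, c j / c (j + 1) = c 0 / c m := by
  induction m with
  | zero => simp [div_self (hc 0 le_rfl)]
  | succ k ih =>
    rw [Finset.prod_range_succ, ih (fun j hj => hc j (by omega))]
    rw [div_mul_div_comm, mul_comm (c k) (c (k+1)), mul_div_mul_right _ _ (hc k (by omega))]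

/-- the quantum superdimension formula evaluated at λ = ε_1 equals
1 − (q^{2n} − q^{−2n})/(q − q^{−1}).  The product over Φ̄⁺₀ runs over the roots
ε_i − ε_j and ε_i + ε_j for i < j, the product over Φ⁺₁ over the roots ε_k, and
all the exponents 2(ε_1 + ρ, α) = 2(ε_1, α) + (2ρ, α) and (2ρ, α) are integers. -/
theorem stmt14 (n : ℕ) (hn : 1 ≤ n) (q : ℂ) (hq0 : q ≠ 0)
    (hq : ∀ m : ℕ, 1 ≤ m → q ^ m ≠ 1) :
    (-1 : ℂ) * q ^ (-(ipZ n (twoRhoZ n) (epsZ n ⟨0, hn⟩)))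
      * (∏ p ∈ Finset.univ.filter (fun p : Fin n × Fin n => p.1 < p.2),
          (((q ^ (2 * ipZ n (epsZ n ⟨0, hn⟩) (epsZ n p.1 - epsZ n p.2)
                    + ipZ n (twoRhoZ n) (epsZ n p.1 - epsZ n p.2)) - 1)
              / (q ^ (ipZ n (twoRhoZ n) (epsZ n p.1 - epsZ n p.2)) - 1))
            * ((q ^ (2 * ipZ n (epsZ n ⟨0, hn⟩) (epsZ n p.1 + epsZ n p.2)
                    + ipZ n (twoRhoZ n) (epsZ n p.1 + epsZ n p.2)) - 1)
              / (q ^ (ipZ n (twoRhoZ n) (epsZ n p.1 + epsZ n p.2)) - 1))))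
      * (∏ k : Fin n,
          (q ^ (2 * ipZ n (epsZ n ⟨0, hn⟩) (epsZ n k)
              + ipZ n (twoRhoZ n) (epsZ n k)) + 1)
            / (q ^ (ipZ n (twoRhoZ n) (epsZ n k)) + 1))
    = 1 - (q ^ (2 * (n : ℤ)) - q ^ (-(2 * (n : ℤ)))) / (q - q⁻¹) := by
  set N : ℤ := (n : ℤ) with hN
  have hN1 : 1 ≤ N := by simp [hN]; omega
  set z : Fin n := ⟨0, hn⟩ with hz
  have hne1 : ∀ m : ℤ, m ≠ 0 → q ^ m - 1 ≠ 0 := fun m hm =>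
    sub_ne_zero.mpr (zpow_ne_one' hq hm)
  have hne2 : ∀ m : ℤ, m ≠ 0 → q ^ m + 1 ≠ 0 := fun m hm h => by
    exact zpow_ne_negone' hq hm (by linear_combination h)
  -- simp the inner products
  simp only [ipZ_sub, ipZ_add, ipZ_right]
  -- values of epsZ and twoRhoZ
  have heps : ∀ i : Fin n, epsZ n z i = if i = z then 1 else 0 := fun i => by
    simp [epsZ, Pi.single_apply]
  have hrho : ∀ i : Fin n, twoRhoZ n i = 2 * N - 2 * ((i : ℤ) + 1) + 1 := fun i => rfl
  -- prefactor
  have hzval : (z : ℕ) = 0 := by rw [hz]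
  have hpre : twoRhoZ n z = 2 * N - 1 := by
    rw [hrho]; simp only [hz]; push_cast; ring
  -- pair product
  have hpair : (∏ p ∈ Finset.univ.filter (fun p : Fin n × Fin n => p.1 < p.2),
      (((q ^ (2 * (epsZ n z p.1 - epsZ n z p.2)
                + (twoRhoZ n p.1 - twoRhoZ n p.2)) - 1)
          / (q ^ (twoRhoZ n p.1 - twoRhoZ n p.2) - 1))
        * ((q ^ (2 * (epsZ n z p.1 + epsZ n z p.2)
                + (twoRhoZ n p.1 + twoRhoZ n p.2)) - 1)
          / (q ^ (twoRhoZ n p.1 + twoRhoZ n p.2) - 1))))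
      = (q ^ (4 * N - 2) - 1) / (q ^ (2 : ℤ) - 1) := by
      set c : ℕ → ℂ := fun m => (q ^ (4 * N - 2 * (m:ℤ)) - 1) / (q ^ (2 * (m:ℤ)) - 1) with hc
      have hzval : (z : ℕ) = 0 := by rw [hz]
      -- step 1: restrict to pairs with p.1 = z
      have hstep1 := Finset.prod_subset (s₁ := Finset.univ.filter
          (fun p : Fin n × Fin n => p.1 = z ∧ p.1 < p.2))
        (s₂ := Finset.univ.filter (fun p : Fin n × Fin n => p.1 < p.2))
        (f := fun p =>
          (((q ^ (2 * (epsZ n z p.1 - epsZ n z p.2)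
                    + (twoRhoZ n p.1 - twoRhoZ n p.2)) - 1)
              / (q ^ (twoRhoZ n p.1 - twoRhoZ n p.2) - 1))
            * ((q ^ (2 * (epsZ n z p.1 + epsZ n z p.2)
                    + (twoRhoZ n p.1 + twoRhoZ n p.2)) - 1)
              / (q ^ (twoRhoZ n p.1 + twoRhoZ n p.2) - 1))))
        (by intro p hp; simp only [Finset.mem_filter] at *; tauto)
        (by
          intro p hp hp2
          simp only [Finset.mem_filter, Finset.mem_univ, true_and, not_and] at hp hp2
          have h1z : p.1 ≠ z := fun h => hp2 h hp
          have h2z : p.2 ≠ z := by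
            intro h
            rw [hz] at h
            have := hp
            rw [Fin.lt_def, h] at this
            omega
          have hlt : (p.1 : ℕ) < (p.2 : ℕ) := hp
          rw [heps, heps, if_neg h1z, if_neg h2z]
          have hd1 : twoRhoZ n p.1 - twoRhoZ n p.2 ≠ 0 := by
            rw [hrho, hrho]; omega
          have hd2 : twoRhoZ n p.1 + twoRhoZ n p.2 ≠ 0 := by
            rw [hrho, hrho]
            have := p.1.isLt; have := p.2.isLt
            omega
          rw [show 2 * ((0:ℤ) - 0) + (twoRhoZ n p.1 - twoRhoZ n p.2)
                = twoRhoZ n p.1 - twoRhoZ n p.2 by ring,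
              show 2 * ((0:ℤ) + 0) + (twoRhoZ n p.1 + twoRhoZ n p.2)
                = twoRhoZ n p.1 + twoRhoZ n p.2 by ring,
              div_self (hne1 _ hd1), div_self (hne1 _ hd2), mul_one])
      -- step 2: reindex to Ico 1 n
      have hstep2 := Finset.prod_nbij'
        (i := fun p : Fin n × Fin n => (p.2 : ℕ))
        (j := fun m : ℕ => ((z, if h : m < n then (⟨m, h⟩ : Fin n) else z) : Fin n × Fin n))
        (s := Finset.univ.filter (fun p : Fin n × Fin n => p.1 = z ∧ p.1 < p.2))
        (t := Finset.Ico 1 n)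
        (f := fun p =>
          (((q ^ (2 * (epsZ n z p.1 - epsZ n z p.2)
                    + (twoRhoZ n p.1 - twoRhoZ n p.2)) - 1)
              / (q ^ (twoRhoZ n p.1 - twoRhoZ n p.2) - 1))
            * ((q ^ (2 * (epsZ n z p.1 + epsZ n z p.2)
                    + (twoRhoZ n p.1 + twoRhoZ n p.2)) - 1)
              / (q ^ (twoRhoZ n p.1 + twoRhoZ n p.2) - 1))))
        (g := fun m => c m / c (m + 1))
        (by
          intro p hp
          simp only [Finset.mem_filter, Finset.mem_univ, true_and] at hp
          obtain ⟨h1, h2⟩ := hp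
          rw [Fin.lt_def, h1, hzval] at h2
          exact Finset.mem_Ico.mpr ⟨h2, p.2.isLt⟩)
        (by
          intro m hm
          rw [Finset.mem_Ico] at hm
          rw [dif_pos hm.2, Finset.mem_filter]
          exact ⟨Finset.mem_univ _, rfl, by rw [Fin.lt_def, hzval]; exact hm.1⟩)
        (by
          intro p hp
          simp only [Finset.mem_filter, Finset.mem_univ, true_and] at hp
          rw [dif_pos p.2.isLt]
          exact Prod.ext hp.1.symm rfl)
        (by
          intro m hm
          rw [Finset.mem_Ico] at hm
          simp only [dif_pos hm.2])
        (by
          intro p hp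
          simp only [Finset.mem_filter, Finset.mem_univ, true_and] at hp
          obtain ⟨h1, h2⟩ := hp
          have h2z : p.2 ≠ z := by
            intro h; rw [h, h1] at h2; exact lt_irrefl _ h2
          rw [heps, heps, if_pos h1, if_neg h2z, hrho, hrho, h1, hc]
          dsimp only
          set m : ℕ := (p.2 : ℕ) with hm
          have e1 : 2 * ((1:ℤ) - 0) + (2 * N - 2 * (((z:ℕ):ℤ) + 1) + 1
                - (2 * N - 2 * ((m:ℤ) + 1) + 1)) = 2 * (((m+1:ℕ)):ℤ) := by
            rw [hzval]; push_cast; ring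
          have e1d : 2 * N - 2 * (((z:ℕ):ℤ) + 1) + 1 - (2 * N - 2 * ((m:ℤ) + 1) + 1)
                = 2 * ((m:ℕ):ℤ) := by
            rw [hzval]; push_cast; ring
          have e2 : 2 * ((1:ℤ) + 0) + (2 * N - 2 * (((z:ℕ):ℤ) + 1) + 1
                + (2 * N - 2 * ((m:ℤ) + 1) + 1)) = 4 * N - 2 * ((m:ℕ):ℤ) := by
            rw [hzval]; push_cast; ring
          have e2d : 2 * N - 2 * (((z:ℕ):ℤ) + 1) + 1 + (2 * N - 2 * ((m:ℤ) + 1) + 1)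
                = 4 * N - 2 * (((m+1:ℕ)):ℤ) := by
            rw [hzval]; push_cast; ring
          rw [e1, e1d, e2, e2d, div_div_div_eq, div_mul_div_comm]
          ring)
      rw [← hstep1, hstep2, Finset.prod_Ico_eq_prod_range]
      have hcz : ∀ j ≤ n - 1, c (1 + j) ≠ 0 := by
        intro j hj
        rw [hc]
        dsimp only
        have hjn : 1 + j ≤ n := by omega
        apply div_ne_zero (hne1 _ ?_) (hne1 _ ?_)
        · have : ((1 + j : ℕ) : ℤ) ≤ N := by rw [hN]; exact_mod_cast hjn
          omega
        · omega
      have ht := tele (fun k => c (1 + k)) (n - 1) hcz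
      simp only [Nat.add_assoc] at ht ⊢
      rw [ht, show 1 + (n - 1) = n by omega]
      have hcn : c n = 1 := by
        rw [hc]
        dsimp only
        rw [show 4 * N - 2 * ((n:ℕ):ℤ) = 2 * N by omega]
        rw [show 2 * ((n:ℕ):ℤ) = 2 * N by omega]
        exact div_self (hne1 _ (by omega))
      rw [hcn, div_one, hc]
      norm_num
  rw [hpair]
  -- odd product
  have hodd : (∏ k : Fin n,
      (q ^ (2 * epsZ n z k + twoRhoZ n k) + 1) / (q ^ (twoRhoZ n k) + 1))
      = (q ^ (2 * N + 1) + 1) / (q ^ (2 * N - 1) + 1) := by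
      rw [Finset.prod_eq_single z]
      · rw [heps, if_pos rfl, hrho]
        have e1 : 2 * (1:ℤ) + (2 * N - 2 * (((z:ℕ):ℤ) + 1) + 1) = 2 * N + 1 := by
          rw [hzval]; push_cast; ring
        have e2 : 2 * N - 2 * (((z:ℕ):ℤ) + 1) + 1 = 2 * N - 1 := by
          rw [hzval]; push_cast; ring
        rw [e1, e2]
      · intro b _ hb
        rw [heps, if_neg hb, hrho]
        have hd : 2 * N - 2 * (((b:ℕ):ℤ) + 1) + 1 ≠ 0 := by omega
        rw [show 2 * (0:ℤ) + (2 * N - 2 * (((b:ℕ):ℤ) + 1) + 1)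
              = 2 * N - 2 * (((b:ℕ):ℤ) + 1) + 1 by ring]
        exact div_self (hne2 _ hd)
      · intro h; exact absurd (Finset.mem_univ z) h
  rw [hodd, hpre]
  -- final algebra
  set u : ℂ := q ^ (2 * N - 1) with hu
  have hu0 : u ≠ 0 := zpow_ne_zero _ hq0
  have h1 : q ^ (4 * N - 2) = u * u := by
    rw [hu, ← zpow_add₀ hq0]; congr 1; ring
  have h2 : q ^ (2 * N + 1) = u * q ^ (2:ℤ) := by
    rw [hu, ← zpow_add₀ hq0]; congr 1; ring
  have h3 : q ^ (2 * N) = u * q := by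
    rw [hu, ← zpow_add_one₀ hq0]; congr 1; ring
  have h4 : q ^ (-(2 * N)) = (u * q)⁻¹ := by rw [zpow_neg, h3]
  have h5 : q ^ (-(2 * N - 1)) = u⁻¹ := by rw [zpow_neg, hu]
  have hq2 : q ^ (2:ℤ) = q * q := by rw [zpow_two]
  have hqq1 : q * q - 1 ≠ 0 := by
    have := hne1 2 (by omega)
    rw [hq2] at this; exact this
  have hu1 : u + 1 ≠ 0 := hne2 _ (by omega)
  have hqi : q - q⁻¹ ≠ 0 := by
    rw [sub_ne_zero]
    intro h
    apply hqq1
    field_simp at h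
    rw [← h]; ring
  rw [h1, h2, h3, h4, h5, hq2]
  have hqq2 : q ^ 2 - 1 ≠ 0 := by rw [sq]; exact hqq1
  field_simp
  ring
end
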